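/- If η : WM(A) → R is the syntactic morphism of a VPL L and x ∈ R, then the singleton preimage η⁻¹(x) can be written as a finite Boolean combination of sets of the form ext_{u,v}⁻¹(η⁻¹(η(L))) for suitable u, v; consequently every pseudo-variety of VPL containing L also contains η⁻¹(x). -/

import Mathlib

inductive VPKind : Type
  | call | ret | intern
deriving DecidableEq

class VPAlphabet (A : Type) where
  kind : A → VPKind

variable {A : Type} [VPAlphabet A]

inductive WellMatched : List A → Prop
  | nil : WellMatched []
  | intern (c : A) (hc : VPAlphabet.kind c = VPKind.intern) : WellMatched [c]
  | ext (a b : A) (w : List A) (ha : VPAlphabet.kind a = VPKind.call)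
      (hb : VPAlphabet.kind b = VPKind.ret) (hw : WellMatched w) :
      WellMatched (a :: w ++ [b])
  | append (u v : List A) (hu : WellMatched u) (hv : WellMatched v) : WellMatched (u ++ v)

theorem wm_insert {u v x : List A} (h : WellMatched (u ++ v)) (hx : WellMatched x) :
    WellMatched (u ++ x ++ v) := by
  suffices H : ∀ w, WellMatched w → ∀ u' v' : List A, w = u' ++ v' →
      WellMatched (u' ++ x ++ v') from H _ h u v rfl
  intro w hw
  induction hw with
  | nil =>
    intro u' v' huv
    obtain ⟨rfl, rfl⟩ := List.append_eq_nil_iff.mp huv.symm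
    simpa using hx
  | intern c hc =>
    intro u' v' huv
    rcases u' with _ | ⟨a, u''⟩
    · simp only [List.nil_append] at huv
      subst huv
      simpa using WellMatched.append x [c] hx (WellMatched.intern c hc)
    · have h1 : c = a := by injection huv
      have h2 : ([] : List A) = u'' ++ v' := by injection huv
      obtain ⟨rfl, rfl⟩ := List.append_eq_nil_iff.mp h2.symm
      subst h1
      simpa using WellMatched.append [c] x (WellMatched.intern c hc) hx
  | ext a b w' ha hb hw' ih =>
    intro u' v' huv
    rcases u' with _ | ⟨a'', u''⟩
    · simp only [List.nil_append] at huv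
      subst huv
      simpa using WellMatched.append x _ hx (WellMatched.ext a b w' ha hb hw')
    · have h1 : a = a'' := by injection huv
      have huv2 : w' ++ [b] = u'' ++ v' := by injection huv
      subst h1
      rcases List.eq_nil_or_concat v' with rfl | ⟨v'', b'', rfl⟩
      · have h3 : u'' = w' ++ [b] := by simpa using huv2.symm
        subst h3
        simpa using WellMatched.append _ x (WellMatched.ext a b w' ha hb hw') hx
      · have h4 : w' = u'' ++ v'' ∧ [b] = [b''] :=
          List.append_inj' (by simpa [List.append_assoc] using huv2) rfl
        obtain ⟨rfl, hb'⟩ := h4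
        have hbb : b = b'' := by injection hb'
        subst hbb
        have := WellMatched.ext a b _ ha hb (ih u'' v'' rfl)
        simpa [List.append_assoc] using this
  | append w₁ w₂ h₁ h₂ ih₁ ih₂ =>
    intro u' v' huv
    rcases List.append_eq_append_iff.mp huv with ⟨a', rfl, rfl⟩ | ⟨c', rfl, rfl⟩
    · have := WellMatched.append _ _ h₁ (ih₂ a' v' rfl)
      simpa [List.append_assoc] using this
    · have := WellMatched.append _ _ (ih₁ u' c' rfl) h₂
      simpa [List.append_assoc] using this

def WM (A : Type) [VPAlphabet A] : Type := {w : List A // WellMatched w}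

instance : Monoid (WM A) where
  one := ⟨[], WellMatched.nil⟩
  mul u v := ⟨u.1 ++ v.1, WellMatched.append _ _ u.2 v.2⟩
  mul_assoc a b c := Subtype.ext (List.append_assoc _ _ _)
  one_mul a := Subtype.ext (List.nil_append _)
  mul_one a := Subtype.ext (List.append_nil _)

@[simp] theorem WM.mul_val (x y : WM A) : (x * y).1 = x.1 ++ y.1 := rfl
@[simp] theorem WM.one_val : (1 : WM A).1 = [] := rfl

instance : Nonempty (WM A) := ⟨1⟩

def extWord (u v : List A) (h : WellMatched (u ++ v)) (x : WM A) : WM A :=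
  ⟨u ++ x.1 ++ v, wm_insert h x.2⟩

@[simp] theorem extWord_val (u v : List A) (h : WellMatched (u ++ v)) (x : WM A) :
    (extWord u v h x).1 = u ++ x.1 ++ v := rfl

structure ExtAlgebra (R : Type*) [Monoid R] where
  O : Submonoid (Function.End R)
  mulLeft_mem : ∀ r : R, (fun x => r * x) ∈ O
  mulRight_mem : ∀ r : R, (fun x => x * r) ∈ O

structure ExtAlgHom {R S : Type*} [Monoid R] [Monoid S]
    (ER : ExtAlgebra R) (ES : ExtAlgebra S) where
  toMonoidHom : R →* S
  opMap : ER.O →* ES.O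
  compat : ∀ (e : ER.O) (r : R),
    (opMap e : Function.End S) (toMonoidHom r) = toMonoidHom ((e : Function.End R) r)

/-- A morphism of `Ext`-algebras from the free `Ext`-algebra of well-matched words
into an `Ext`-algebra `R`, given by its monoid part and by the images of the
operations `ext_{u,v}`. -/
structure ExtHomWM (A : Type) [VPAlphabet A] {R : Type*} [Monoid R] (ER : ExtAlgebra R) where
  toMonoidHom : WM A →* R
  op : ∀ u v : List A, WellMatched (u ++ v) → ER.O
  op_one : op [] [] WellMatched.nil = 1
  op_comp : ∀ u v (h : WellMatched (u ++ v)) u' v' (h' : WellMatched (u' ++ v'))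
      (h'' : WellMatched ((u ++ u') ++ (v' ++ v))),
      op (u ++ u') (v' ++ v) h'' = op u v h * op u' v' h'
  op_spec : ∀ u v (h : WellMatched (u ++ v)) (x : WM A),
      (op u v h : Function.End R) (toMonoidHom x) = toMonoidHom (extWord u v h x)

/-- `R` recognises `L` via the morphism `φ` when `L` is the preimage of its image. -/
def Recognises {R : Type*} [Monoid R] {ER : ExtAlgebra R}
    (φ : ExtHomWM A ER) (L : Set (WM A)) : Prop :=
  L = φ.toMonoidHom ⁻¹' (φ.toMonoidHom '' L)

/-- The free `Ext`-algebra structure on the monoid of well-matched words. -/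
def freeExt (A : Type) [VPAlphabet A] : ExtAlgebra (WM A) where
  O :=
    { carrier := {e | ∃ u v, ∃ h : WellMatched (u ++ v), ∀ x : WM A, e x = extWord u v h x}
      one_mem' := ⟨[], [], WellMatched.nil, fun x => Subtype.ext (by show x.1 = [] ++ x.1 ++ []; simp)⟩
      mul_mem' := by
        rintro e f ⟨u, v, h, he⟩ ⟨u', v', h', hf⟩
        have h'' : WellMatched ((u ++ u') ++ (v' ++ v)) := by
          simpa [List.append_assoc] using wm_insert h h'
        exact ⟨u ++ u', v' ++ v, h'', fun x => by
          rw [show (e * f) x = e (f x) from rfl, hf, he]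
          exact Subtype.ext (by simp [List.append_assoc])⟩ }
  mulLeft_mem r := ⟨r.1, [], by simpa using r.2, fun x => Subtype.ext (by simp)⟩
  mulRight_mem r := ⟨[], r.1, by simpa using r.2, fun x => Subtype.ext (by simp)⟩

/-- A sub-`Ext`-algebra of an `Ext`-algebra. -/
structure SubExt {S : Type*} [Monoid S] (ES : ExtAlgebra S) where
  carrier : Submonoid S
  ops : Submonoid (Function.End S)
  ops_le : ops ≤ ES.O
  maps_to : ∀ e ∈ ops, ∀ x ∈ carrier, e x ∈ carrier
  mulLeft_mem : ∀ r ∈ carrier, (fun x => r * x) ∈ ops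
  mulRight_mem : ∀ r ∈ carrier, (fun x => x * r) ∈ ops

/-- The `Ext`-algebra structure induced on a sub-`Ext`-algebra. -/
def SubExt.toExtAlgebra {S : Type*} [Monoid S] {ES : ExtAlgebra S} (T : SubExt ES) :
    ExtAlgebra T.carrier where
  O :=
    { carrier := {e : Function.End T.carrier | ∃ f ∈ T.ops, ∀ x : T.carrier, (e x : S) = f x}
      one_mem' := ⟨1, T.ops.one_mem, fun _ => rfl⟩
      mul_mem' := by
        rintro e e' ⟨f, hf, he⟩ ⟨f', hf', he'⟩
        exact ⟨f * f', mul_mem hf hf', fun x => by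
          rw [show (e * e') x = e (e' x) from rfl, show (f * f') (x : S) = f (f' x) from rfl,
            ← he', he]⟩ }
  mulLeft_mem r := ⟨fun x => (r : S) * x, T.mulLeft_mem r r.2, fun _ => rfl⟩
  mulRight_mem r := ⟨fun x => x * (r : S), T.mulRight_mem r r.2, fun _ => rfl⟩

/-- `ER` is a quotient of `ES` if there is a surjective morphism of `Ext`-algebras
from `ES` onto `ER`. -/
def IsQuotientOf {R S : Type*} [Monoid R] [Monoid S]
    (ER : ExtAlgebra R) (ES : ExtAlgebra S) : Prop :=
  ∃ h : ExtAlgHom ES ER, Function.Surjective h.toMonoidHom ∧ Function.Surjective h.opMap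

/-- Bundled finite `Ext`-algebras. -/
structure BExt : Type 1 where
  carrier : Type
  [mon : Monoid carrier]
  [fin : Finite carrier]
  ext : ExtAlgebra carrier

attribute [instance] BExt.mon BExt.fin

/-- The syntactic relation of a language of well-matched words. -/
def synRel (L : Set (WM A)) (x y : WM A) : Prop :=
  ∀ u v (h : WellMatched (u ++ v)), (extWord u v h x ∈ L ↔ extWord u v h y ∈ L)

theorem synRel_equivalence (L : Set (WM A)) : Equivalence (synRel L) :=
  ⟨fun _ _ _ _ => Iff.rfl, fun h u v hw => (h u v hw).symm,
    fun h h' u v hw => (h u v hw).trans (h' u v hw)⟩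

theorem synRel_ext {L : Set (WM A)} {x y : WM A} (hxy : synRel L x y)
    (u v : List A) (h : WellMatched (u ++ v)) :
    synRel L (extWord u v h x) (extWord u v h y) := by
  intro s t hst
  have h1 : WellMatched ((s ++ u) ++ (v ++ t)) := by
    simpa [List.append_assoc] using wm_insert hst h
  have e1 : extWord s t hst (extWord u v h x) = extWord (s ++ u) (v ++ t) h1 x :=
    Subtype.ext (by simp [List.append_assoc])
  have e2 : extWord s t hst (extWord u v h y) = extWord (s ++ u) (v ++ t) h1 y :=
    Subtype.ext (by simp [List.append_assoc])
  rw [e1, e2]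
  exact hxy (s ++ u) (v ++ t) h1

theorem synRel_mul {L : Set (WM A)} {x x' y y' : WM A}
    (hx : synRel L x x') (hy : synRel L y y') : synRel L (x * y) (x' * y') := by
  intro u v h
  have hv1 : WellMatched (u ++ (y.1 ++ v)) := by
    simpa [List.append_assoc] using wm_insert h y.2
  have hv2 : WellMatched ((u ++ x'.1) ++ v) := by
    simpa [List.append_assoc] using wm_insert h x'.2
  have e1 : extWord u v h (x * y) = extWord u (y.1 ++ v) hv1 x :=
    Subtype.ext (by simp [List.append_assoc])
  have e2 : extWord u (y.1 ++ v) hv1 x' = extWord (u ++ x'.1) v hv2 y :=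
    Subtype.ext (by simp [List.append_assoc])
  have e3 : extWord u v h (x' * y') = extWord (u ++ x'.1) v hv2 y' :=
    Subtype.ext (by simp [List.append_assoc])
  rw [e1, e3]
  exact (hx u _ hv1).trans (by rw [e2]; exact hy _ v hv2)

/-- The syntactic congruence of `L` on the monoid of well-matched words. -/
def synCon (L : Set (WM A)) : Con (WM A) where
  r := synRel L
  iseqv := synRel_equivalence L
  mul' := synRel_mul

/-- The operations of the syntactic `Ext`-algebra of `L`. -/
def synO (L : Set (WM A)) : Submonoid (Function.End (synCon L).Quotient) where
  carrier := {e | ∃ u v, ∃ h : WellMatched (u ++ v),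
    ∀ x : WM A, e ((synCon L).mk' x) = (synCon L).mk' (extWord u v h x)}
  one_mem' := ⟨[], [], WellMatched.nil, fun x => by
    show (synCon L).mk' x = _
    congr 1
    exact Subtype.ext (by simp)⟩
  mul_mem' := by
    rintro e f ⟨u, v, h, he⟩ ⟨u', v', h', hf⟩
    have h'' : WellMatched ((u ++ u') ++ (v' ++ v)) := by
      simpa [List.append_assoc] using wm_insert h h'
    refine ⟨u ++ u', v' ++ v, h'', fun x => ?_⟩
    rw [show (e * f) ((synCon L).mk' x) = e (f ((synCon L).mk' x)) from rfl, hf, he]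
    congr 1
    exact Subtype.ext (by simp [List.append_assoc])

/-- The syntactic `Ext`-algebra of a language of well-matched words. -/
def synExt (L : Set (WM A)) : ExtAlgebra (synCon L).Quotient where
  O := synO L
  mulLeft_mem q := by
    obtain ⟨w, rfl⟩ := Con.mk'_surjective q
    refine ⟨w.1, [], by simpa using w.2, fun x => ?_⟩
    show (synCon L).mk' w * (synCon L).mk' x = _
    rw [← map_mul]
    congr 1
    exact Subtype.ext (by simp)
  mulRight_mem q := by
    obtain ⟨w, rfl⟩ := Con.mk'_surjective q
    refine ⟨[], w.1, by simpa using w.2, fun x => ?_⟩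
    show (synCon L).mk' x * (synCon L).mk' w = _
    rw [← map_mul]
    exact congrArg _ (Subtype.ext (by simp))

/-! ### Visibly pushdown automata -/

structure VPA (A : Type) [VPAlphabet A] where
  Q : Type
  [finQ : Finite Q]
  q0 : Q
  Γ : Type
  [finΓ : Finite Γ]
  bot : Γ
  δ : A → Q → Γ → Q × List Γ
  F : Set Q
  call_spec : ∀ a q G, VPAlphabet.kind a = VPKind.call → ∃ G', (δ a q G).2 = [G', G]
  ret_spec : ∀ a q G, VPAlphabet.kind a = VPKind.ret → (δ a q G).2 = []
  int_spec : ∀ a q G, VPAlphabet.kind a = VPKind.intern → (δ a q G).2 = [G]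

attribute [instance] VPA.finQ VPA.finΓ

def VPA.runAux (M : VPA A) : List A → M.Q → List M.Γ → M.Q × List M.Γ
  | [], q, s => (q, s)
  | _ :: w, q, [] => M.runAux w q []
  | a :: w, q, G :: s => M.runAux w (M.δ a q G).1 ((M.δ a q G).2 ++ s)

def VPA.Accepts (M : VPA A) (w : List A) : Prop :=
  (M.runAux w M.q0 [M.bot]).1 ∈ M.F ∧ (M.runAux w M.q0 [M.bot]).2 = [M.bot]

/-- The language of well-matched words accepted by a VPA. -/
def VPA.lang (M : VPA A) : Set (WM A) := {w | M.Accepts w.1}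

/-- `L` is a visibly pushdown language: it is accepted by a visibly pushdown automaton. -/
def IsVPL (L : Set (WM A)) : Prop := ∃ M : VPA A, L = M.lang

/-- A pseudo-variety of visibly pushdown languages. -/
structure LangVariety where
  mem : ∀ (B : Type) [VPAlphabet B] [Finite B], Set (WM B) → Prop
  vpl : ∀ (B : Type) [VPAlphabet B] [Finite B] (L : Set (WM B)), mem B L → IsVPL L
  univ_mem : ∀ (B : Type) [VPAlphabet B] [Finite B], mem B Set.univ
  compl_mem : ∀ (B : Type) [VPAlphabet B] [Finite B] (L : Set (WM B)), mem B L → mem B Lᶜ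
  inter_mem : ∀ (B : Type) [VPAlphabet B] [Finite B] (L₁ L₂ : Set (WM B)),
    mem B L₁ → mem B L₂ → mem B (L₁ ∩ L₂)
  inv_ext : ∀ (B : Type) [VPAlphabet B] [Finite B] (u v : List B)
    (h : WellMatched (u ++ v)) (L : Set (WM B)), mem B L → mem B (extWord u v h ⁻¹' L)
  inv_hom : ∀ (B C : Type) [VPAlphabet B] [Finite B] [VPAlphabet C] [Finite C]
    (φ : ExtHomWM B (freeExt C)) (L : Set (WM C)), mem C L → mem B (φ.toMonoidHom ⁻¹' L)


/-- Finite Boolean combinations generated by a family of sets. -/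
inductive BoolComb {α : Type*} (G : Set (Set α)) : Set α → Prop
  | basic : ∀ s ∈ G, BoolComb G s
  | univ : BoolComb G Set.univ
  | compl : ∀ s, BoolComb G s → BoolComb G sᶜ
  | inter : ∀ s t, BoolComb G s → BoolComb G t → BoolComb G (s ∩ t)

/-!
Words with the same behaviour on an automaton for `L` (the state reached from each state and
top stack symbol) are syntactically equivalent, so the syntactic congruence has finite index.
Two classes differ exactly when some `ext_{u,v}⁻¹(L)` separates them, so a class is the
intersection, over the finitely many other classes, of such a set or its complement.
-/

namespace BoolComb

variable {α : Type*} {G : Set (Set α)}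

theorem empty : BoolComb G ∅ := by
  simpa using compl _ (univ (G := G))

theorem iInter {ι : Type*} [Finite ι] {T : ι → Set α} (hT : ∀ i, BoolComb G (T i)) :
    BoolComb G (⋂ i, T i) := by
  classical
  cases nonempty_fintype ι
  suffices h : ∀ s : Finset ι, BoolComb G (⋂ i ∈ s, T i) by simpa using h Finset.univ
  intro s
  induction s using Finset.induction_on with
  | empty => simpa using univ
  | insert i s _ ih =>
    rw [Finset.set_biInter_insert]
    exact inter _ _ (hT i) ih

variable {β : Type*} {f : α → β}

theorem exists_separating (hf : ∀ a b, f a = f b ↔ ∀ s ∈ G, (a ∈ s ↔ b ∈ s))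
    {a b : α} (hab : f a ≠ f b) :
    ∃ T, BoolComb G T ∧ f ⁻¹' {f a} ⊆ T ∧ Disjoint (f ⁻¹' {f b}) T := by
  obtain ⟨s, hsG, has⟩ : ∃ s ∈ G, ¬(a ∈ s ↔ b ∈ s) := by
    simpa only [not_forall, exists_prop] using mt (hf a b).mpr hab
  have fibre_mem (c z : α) (hz : f z = f c) : z ∈ s ↔ c ∈ s := (hf z c).mp hz s hsG
  by_cases ha : a ∈ s
  · refine ⟨s, basic s hsG, fun z hz => (fibre_mem a z hz).mpr ha, ?_⟩
    exact Set.disjoint_left.mpr fun z hz hzs =>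
      has (iff_of_true ha ((fibre_mem b z hz).mp hzs))
  · refine ⟨sᶜ, compl s (basic s hsG), fun z hz hzs => ha ((fibre_mem a z hz).mp hzs), ?_⟩
    refine Set.disjoint_left.mpr fun z hz hzs => hzs ((fibre_mem b z hz).mpr ?_)
    exact not_not.mp fun hb => has (iff_of_false ha hb)

theorem preimage_singleton [Finite β]
    (hf : ∀ a b, f a = f b ↔ ∀ s ∈ G, (a ∈ s ↔ b ∈ s)) (x : β) :
    BoolComb G (f ⁻¹' {x}) := by
  by_cases hx : x ∈ Set.range f
  swap
  · rw [Set.preimage_singleton_eq_empty.mpr hx]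
    exact empty
  obtain ⟨a, rfl⟩ := hx
  have separate : ∀ y : {y // y ≠ f a},
      ∃ T, BoolComb G T ∧ f ⁻¹' {f a} ⊆ T ∧ Disjoint (f ⁻¹' {(y : β)}) T := by
    rintro ⟨y, hy⟩
    by_cases hyf : y ∈ Set.range f
    · obtain ⟨b, rfl⟩ := hyf
      exact exists_separating hf (Ne.symm hy)
    · exact ⟨Set.univ, univ, Set.subset_univ _, by
        simp [Set.preimage_singleton_eq_empty.mpr hyf]⟩
  choose T hTG haT hyT using separate
  have fibre_eq : f ⁻¹' {f a} = ⋂ y, T y := by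
    refine subset_antisymm (Set.subset_iInter haT) fun z hz => ?_
    by_contra hza
    exact Set.disjoint_left.mp (hyT ⟨f z, hza⟩) rfl (Set.mem_iInter.mp hz _)
  rw [fibre_eq]
  exact iInter hTG

end BoolComb

theorem LangVariety.mem_of_boolComb {A : Type} [VPAlphabet A] [Finite A] (V : LangVariety)
    {G : Set (Set (WM A))} (hG : ∀ s ∈ G, V.mem A s) {t : Set (WM A)} (ht : BoolComb G t) :
    V.mem A t := by
  induction ht with
  | basic s hs => exact hG s hs
  | univ => exact V.univ_mem A
  | compl s _ ih => exact V.compl_mem A s ih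
  | inter s t _ _ ihs iht => exact V.inter_mem A s t ihs iht

namespace VPA

variable {A : Type} [VPAlphabet A] (M : VPA A)

theorem runAux_append (u v : List A) (q : M.Q) (s : List M.Γ) :
    M.runAux (u ++ v) q s = M.runAux v (M.runAux u q s).1 (M.runAux u q s).2 := by
  induction u generalizing q s with
  | nil => rfl
  | cons a u ih =>
    cases s with
    | nil => simpa [VPA.runAux] using ih _ _
    | cons G s => simpa [VPA.runAux] using ih _ _

theorem runAux_nil_stack (w : List A) (q : M.Q) : M.runAux w q [] = (q, []) := by
  induction w generalizing q with
  | nil => rfl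
  | cons a w ih => simpa [VPA.runAux] using ih _

theorem runAux_cons_of_wellMatched {w : List A} (hw : WellMatched w) (q : M.Q) (G : M.Γ)
    (s : List M.Γ) : M.runAux w q (G :: s) = ((M.runAux w q [G]).1, G :: s) := by
  induction hw generalizing q G s with
  | nil => rfl
  | intern c hc => simp [VPA.runAux, M.int_spec c q G hc]
  | ext a b w ha hb _ ih =>
    obtain ⟨G', hG'⟩ := M.call_spec a q G ha
    have push (t : List M.Γ) : M.runAux (a :: w ++ [b]) q (G :: t)
        = M.runAux (w ++ [b]) (M.δ a q G).1 (G' :: G :: t) := by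
      rw [List.cons_append]
      simp only [VPA.runAux, hG', List.cons_append, List.nil_append]
    rw [push, push, runAux_append, runAux_append, ih _ G' (G :: s), ih _ G' [G]]
    simp [VPA.runAux, M.ret_spec b _ G' hb]
  | append u v _ _ ihu ihv =>
    rw [runAux_append, runAux_append, ihu q G s, ihv _ G s, ihu q G [], ihv _ G []]

def behaviour (w : WM A) : M.Q → M.Γ → M.Q := fun q G => (M.runAux w.1 q [G]).1

theorem runAux_eq_of_behaviour_eq {w w' : WM A} (h : M.behaviour w = M.behaviour w')
    (q : M.Q) (s : List M.Γ) : M.runAux w.1 q s = M.runAux w'.1 q s := by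
  cases s with
  | nil => rw [runAux_nil_stack, runAux_nil_stack]
  | cons G s =>
    rw [runAux_cons_of_wellMatched M w.2, runAux_cons_of_wellMatched M w'.2]
    exact congrArg (·, G :: s) (congrFun (congrFun h q) G)

theorem synRel_lang_of_behaviour_eq {w w' : WM A} (h : M.behaviour w = M.behaviour w') :
    synRel M.lang w w' := by
  intro u v _
  have run_eq :
      M.runAux (u ++ w.1 ++ v) M.q0 [M.bot] = M.runAux (u ++ w'.1 ++ v) M.q0 [M.bot] := by
    simp only [List.append_assoc, runAux_append, runAux_eq_of_behaviour_eq M h]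
  simp only [VPA.lang, Set.mem_ofPred_eq, extWord_val, VPA.Accepts, run_eq]

end VPA

theorem finite_synCon_quotient {A : Type} [VPAlphabet A] {L : Set (WM A)} (hL : IsVPL L) :
    Finite (synCon L).Quotient := by
  obtain ⟨M, rfl⟩ := hL
  refine Finite.of_surjective
    (fun b : Set.range M.behaviour => (synCon M.lang).mk' b.2.choose) fun q => ?_
  obtain ⟨w, rfl⟩ := Con.mk'_surjective q
  let b : Set.range M.behaviour := ⟨M.behaviour w, w, rfl⟩
  exact ⟨b, (synCon M.lang).eq.mpr (M.synRel_lang_of_behaviour_eq b.2.choose_spec)⟩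

theorem synCon_mk'_eq_iff {A : Type} [VPAlphabet A] (L : Set (WM A)) (a b : WM A) :
    (synCon L).mk' a = (synCon L).mk' b ↔
    ∀ s ∈ {S : Set (WM A) | ∃ u v, ∃ h : WellMatched (u ++ v), S = extWord u v h ⁻¹' L},
      (a ∈ s ↔ b ∈ s) :=
  (synCon L).eq.trans
    ⟨fun h _ ⟨u, v, hw, hs⟩ => hs ▸ h u v hw, fun h u v hw => h _ ⟨u, v, hw, rfl⟩⟩

/-- Singleton preimages under the syntactic morphism of a VPL are finite Boolean
combinations of inverse ext-operations of `L`; hence any pseudo-variety of VPL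
containing `L` contains them. -/
theorem statement7 {A : Type} [VPAlphabet A] [Finite A] (L : Set (WM A))
    (hL : IsVPL L) (x : (synCon L).Quotient) :
    BoolComb {S : Set (WM A) | ∃ u v, ∃ h : WellMatched (u ++ v), S = extWord u v h ⁻¹' L}
      ((synCon L).mk' ⁻¹' {x}) ∧
    ∀ V : LangVariety, V.mem A L → V.mem A ((synCon L).mk' ⁻¹' {x}) := by
  have := finite_synCon_quotient hL
  have fibre_comb := BoolComb.preimage_singleton (synCon_mk'_eq_iff L) x
  refine ⟨fibre_comb, fun V hV => V.mem_of_boolComb ?_ fibre_comb⟩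
  rintro _ ⟨u, v, h, rfl⟩
  exact V.inv_ext A u v h L hV
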